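/- Let u_1, u_2, u_3, u_4 ∈ ℝ⁴ with ⟨u_i, u_i⟩ = 1 for all i, let G be the 4×4 matrix with G_{ij} = ⟨u_i, u_j⟩, and assume det G < 0, c_{33} > 0, and c_{44} > 0. Define w_i := Σ_{k=1}^{4} c_{ik} u_k, v_3 := w_3 / √(−c_{33} · det G), and v_4 := w_4 / √(−c_{44} · det G). Then ⟨v_3, v_3⟩ = ⟨v_4, v_4⟩ = −1 and ⟨v_3, v_4⟩ = −c_{34} / √(c_{33} c_{44}). In particular, when v_3 and v_4 lie on the same sheet of the hyperboloid ⟨x,x⟩ = −1, the hyperbolic distance l between the two vertices v_3 and v_4 satisfies cosh l = c_{34} / √(c_{33} c_{44}). -/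

import Mathlib

noncomputable section
open Matrix BigOperators

/-- The Lorentzian inner product on `ℝ^{n+1}`:
`⟨x, y⟩ = -x₀y₀ + x₁y₁ + ⋯ + xₙyₙ`. -/
def lform {n : ℕ} (x y : Fin (n + 1) → ℝ) : ℝ :=
  ∑ i, (if i = 0 then (-1 : ℝ) else 1) * x i * y i

/-- The `(i,j)` cofactor of a square matrix: `(-1)^(i+j)` times the determinant
of the matrix obtained by deleting the `i`-th row and the `j`-th column. -/
def cofactor {n : ℕ} (G : Matrix (Fin (n + 1)) (Fin (n + 1)) ℝ) (i j : Fin (n + 1)) : ℝ :=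
  (-1 : ℝ) ^ ((i : ℕ) + (j : ℕ)) * (G.submatrix i.succAbove j.succAbove).det

/-!
The vectors `w i = ∑ₖ c_{ik} u k` have Gram matrix `C G Cᵀ` with `C` the cofactor matrix, and
since `Cᵀ = adj G` and `G * adj G = det G • 1`, this is `det G • C`: so `⟨w i, w j⟩ = c_{ij} det G`.
Normalising by `√(-c_{ii} det G)` then gives the three inner products, and the distance formula
is the third one read through `cosh d = -⟨x, y⟩`.
-/

section Lorentz

variable {n : ℕ}

lemma lform_smul_left (a : ℝ) (x y : Fin (n + 1) → ℝ) :
    lform (a • x) y = a * lform x y := by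
  simp only [lform, Pi.smul_apply, smul_eq_mul, Finset.mul_sum]
  exact Finset.sum_congr rfl fun i _ => by ring

lemma lform_smul_right (a : ℝ) (x y : Fin (n + 1) → ℝ) :
    lform x (a • y) = a * lform x y := by
  simp only [lform, Pi.smul_apply, smul_eq_mul, Finset.mul_sum]
  exact Finset.sum_congr rfl fun i _ => by ring

lemma lform_sum_left {ι : Type*} [Fintype ι] (f : ι → Fin (n + 1) → ℝ)
    (y : Fin (n + 1) → ℝ) :
    lform (∑ k, f k) y = ∑ k, lform (f k) y := by
  simp only [lform, Finset.sum_apply, Finset.sum_mul, Finset.mul_sum]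
  exact Finset.sum_comm

lemma lform_sum_right {ι : Type*} [Fintype ι] (x : Fin (n + 1) → ℝ)
    (f : ι → Fin (n + 1) → ℝ) :
    lform x (∑ k, f k) = ∑ k, lform x (f k) := by
  simp only [lform, Finset.sum_apply, Finset.mul_sum]
  exact Finset.sum_comm

lemma lform_sum_smul_sum_smul {ι : Type*} [Fintype ι] (a b : ι → ℝ)
    (u : ι → Fin (n + 1) → ℝ) :
    lform (∑ k, a k • u k) (∑ l, b l • u l) = ∑ k, a k * ∑ l, b l * lform (u k) (u l) := by
  simp only [lform_sum_left, lform_sum_right, lform_smul_left, lform_smul_right, Finset.mul_sum]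
  rw [Finset.sum_comm]
  exact Finset.sum_congr rfl fun _ _ => Finset.sum_congr rfl fun _ _ => by ring

end Lorentz

lemma cofactor_eq_adjugate_apply {n : ℕ} (G : Matrix (Fin (n + 1)) (Fin (n + 1)) ℝ)
    (i j : Fin (n + 1)) : cofactor G i j = adjugate G j i := by
  rw [cofactor, adjugate_fin_succ_eq_det_submatrix]

lemma lform_sum_cofactor_smul {m n : ℕ} (u : Fin (m + 1) → Fin (n + 1) → ℝ)
    (G : Matrix (Fin (m + 1)) (Fin (m + 1)) ℝ) (hG : ∀ k l, G k l = lform (u k) (u l))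
    (i j : Fin (m + 1)) :
    lform (∑ k, cofactor G i k • u k) (∑ l, cofactor G j l • u l) = cofactor G i j * G.det := by
  have row_expansion : ∀ k, ∑ l, cofactor G j l * G k l = if k = j then G.det else 0 := by
    intro k
    simpa [mul_apply, cofactor_eq_adjugate_apply, one_apply, mul_comm] using
      congrFun (congrFun (mul_adjugate G) k) j
  simp [lform_sum_smul_sum_smul, ← hG, row_expansion]

lemma inv_sqrt_neg_mul_inv_sqrt_neg_mul {a : ℝ} (ha : a < 0) :
    (√(-a))⁻¹ * ((√(-a))⁻¹ * a) = -1 := by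
  rw [← mul_assoc, ← mul_inv, Real.mul_self_sqrt (by linarith), inv_neg, neg_mul,
    inv_mul_cancel₀ ha.ne]

lemma inv_sqrt_mul_inv_sqrt_mul_eq {A B C D : ℝ} (hA : 0 < A) (hB : 0 < B) (hD : D < 0) :
    (√(-(A * D)))⁻¹ * ((√(-(B * D)))⁻¹ * (C * D)) = -C / √(A * B) := by
  have sqrt_prod : √(-(A * D)) * √(-(B * D)) = √(A * B) * -D := by
    rw [← Real.sqrt_mul (by nlinarith), show -(A * D) * -(B * D) = A * B * (-D) ^ 2 by ring,
      Real.sqrt_mul (by positivity), Real.sqrt_sq (by linarith)]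
  have hAB : 0 < √(A * B) := Real.sqrt_pos.mpr (by positivity)
  rw [← mul_assoc, ← mul_inv, sqrt_prod]
  field_simp [hD.ne, hAB.ne']

theorem stmt6_general (u : Fin 4 → (Fin 4 → ℝ))
    (G : Matrix (Fin 4) (Fin 4) ℝ)
    (hGdef : ∀ i j, G i j = lform (u i) (u j))
    (hdet : G.det < 0)
    (h33 : 0 < cofactor G 2 2) (h44 : 0 < cofactor G 3 3) :
    let w : Fin 4 → (Fin 4 → ℝ) := fun i => ∑ k, cofactor G i k • u k
    let v3 : Fin 4 → ℝ := (Real.sqrt (-(cofactor G 2 2 * G.det)))⁻¹ • w 2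
    let v4 : Fin 4 → ℝ := (Real.sqrt (-(cofactor G 3 3 * G.det)))⁻¹ • w 3
    lform v3 v3 = -1 ∧ lform v4 v4 = -1 ∧
    lform v3 v4 = -cofactor G 2 3 / Real.sqrt (cofactor G 2 2 * cofactor G 3 3) ∧
    (0 < v3 0 * v4 0 →
      ∀ l : ℝ, Real.cosh l = -lform v3 v4 →
        Real.cosh l = cofactor G 2 3 / Real.sqrt (cofactor G 2 2 * cofactor G 3 3)) := by
  intro w v3 v4
  have hw : ∀ i j, lform (w i) (w j) = cofactor G i j * G.det :=
    lform_sum_cofactor_smul u G hGdef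
  have h34 : lform v3 v4 = -cofactor G 2 3 / √(cofactor G 2 2 * cofactor G 3 3) := by
    simp only [v3, v4, lform_smul_left, lform_smul_right, hw]
    rw [mul_left_comm]
    exact inv_sqrt_mul_inv_sqrt_mul_eq h33 h44 hdet
  refine ⟨?_, ?_, h34, fun _ l hl => by rw [hl, h34, neg_div, neg_neg]⟩
  · simp only [v3, lform_smul_left, lform_smul_right, hw]
    exact inv_sqrt_neg_mul_inv_sqrt_neg_mul (mul_neg_of_pos_of_neg h33 hdet)
  · simp only [v4, lform_smul_left, lform_smul_right, hw]
    exact inv_sqrt_neg_mul_inv_sqrt_neg_mul (mul_neg_of_pos_of_neg h44 hdet)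

theorem stmt6 (u : Fin 4 → (Fin 4 → ℝ))
    (hunit : ∀ i, lform (u i) (u i) = 1)
    (G : Matrix (Fin 4) (Fin 4) ℝ)
    (hGdef : ∀ i j, G i j = lform (u i) (u j))
    (hdet : G.det < 0)
    (h33 : 0 < cofactor G 2 2) (h44 : 0 < cofactor G 3 3) :
    let w : Fin 4 → (Fin 4 → ℝ) := fun i => ∑ k, cofactor G i k • u k
    let v3 : Fin 4 → ℝ := (Real.sqrt (-(cofactor G 2 2 * G.det)))⁻¹ • w 2
    let v4 : Fin 4 → ℝ := (Real.sqrt (-(cofactor G 3 3 * G.det)))⁻¹ • w 3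
    lform v3 v3 = -1 ∧ lform v4 v4 = -1 ∧
    lform v3 v4 = -cofactor G 2 3 / Real.sqrt (cofactor G 2 2 * cofactor G 3 3) ∧
    (0 < v3 0 * v4 0 →
      ∀ l : ℝ, Real.cosh l = -lform v3 v4 →
        Real.cosh l = cofactor G 2 3 / Real.sqrt (cofactor G 2 2 * cofactor G 3 3)) :=
  stmt6_general u G hGdef hdet h33 h44
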